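/- Let S →^i (X, H) ←^o T and T →^{i'} (Y, G) ←^{o'} U be composable open Markov processes, and let j : X → Z, k : Y → Z exhibit Z as a pushout of o : T → X and i' : T → Y, so that the composite open Markov process is S →^{j∘i} (Z, H ⊙ G) ←^{k∘o'} U with H ⊙ G = j_* H j^* + k_* G k^*. Then the black-boxing of the composite equals the composite of the black-boxings as linear relations: the set of (a, I, c, O') ∈ ℝ^S ⊕ ℝ^S ⊕ ℝ^U ⊕ ℝ^U lying in the black-boxing of S → (Z, H ⊙ G) ← U equals the set of (a, I, c, O') such that there exist (b, O) ∈ ℝ^T ⊕ ℝ^T with (a, I, b, O) in the black-boxing of S → (X, H) ← T and (b, O, c, O') in the black-boxing of T → (Y, G) ← U. -/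

import Mathlib

open scoped BigOperators

noncomputable section

/-- The pushforward of vectors along a map of finite sets:
`(f_* v) b = ∑_{a : f a = b} v a`. -/
def pushforward {A B : Type} [Fintype A] [DecidableEq B] (f : A → B) :
    (A → ℝ) →ₗ[ℝ] (B → ℝ) where
  toFun v := fun b => ∑ a ∈ Finset.univ.filter (fun a => f a = b), v a
  map_add' u v := by
    funext b
    simp [Finset.sum_add_distrib]
  map_smul' c v := by
    funext b
    simp [Finset.mul_sum]

/-- The pullback of vectors along a map of finite sets: `f^* v = v ∘ f`. -/
def pullback {A B : Type} (f : A → B) : (B → ℝ) →ₗ[ℝ] (A → ℝ) where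
  toFun v := v ∘ f
  map_add' _ _ := rfl
  map_smul' _ _ := rfl

/-- A probability distribution on a finite set: nonnegative components summing to 1. -/
def IsProbDist {A : Type} [Fintype A] (v : A → ℝ) : Prop :=
  (∀ a, 0 ≤ v a) ∧ ∑ a, v a = 1

/-- A linear operator is stochastic if it maps probability distributions to
probability distributions. -/
def IsStochasticOp {A B : Type} [Fintype A] [Fintype B]
    (T : (A → ℝ) →ₗ[ℝ] (B → ℝ)) : Prop :=
  ∀ v, IsProbDist v → IsProbDist (T v)

/-- An operator `H` is infinitesimal stochastic if its off-diagonal matrix entries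
`H_{ij} = (H e_j) i` are nonnegative and each column sums to zero. -/
def IsInfinitesimalStochastic {A : Type} [Fintype A] [DecidableEq A]
    (H : (A → ℝ) →ₗ[ℝ] (A → ℝ)) : Prop :=
  (∀ i j, i ≠ j → 0 ≤ H (Pi.single j 1) i) ∧ ∀ j, ∑ i, H (Pi.single j 1) i = 0

/-- A stochastic section for `p : X → X'` is a stochastic operator
`s : ℝ^{X'} → ℝ^X` with `p_* ∘ s = 1`. -/
def IsStochasticSection {X X' : Type} [Fintype X] [Fintype X'] [DecidableEq X']
    (p : X → X') (s : (X' → ℝ) →ₗ[ℝ] (X → ℝ)) : Prop :=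
  IsStochasticOp s ∧ pushforward p ∘ₗ s = LinearMap.id

/-- A matrix is stochastic if it maps probability distributions to probability
distributions. -/
def IsStochasticMat {A B : Type} [Fintype A] [Fintype B] (T : Matrix B A ℝ) : Prop :=
  ∀ v, IsProbDist v → IsProbDist (T.mulVec v)

/-- A matrix is infinitesimal stochastic if its off-diagonal entries are nonnegative
and its columns sum to zero. -/
def IsInfStochMat {A : Type} [Fintype A] (H : Matrix A A ℝ) : Prop :=
  (∀ i j, i ≠ j → 0 ≤ H i j) ∧ ∀ j, ∑ i, H i j = 0

/-- A Markov semigroup: a continuous one-parameter semigroup of stochastic matrices. -/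
def IsMarkovSemigroup {A : Type} [Fintype A] [DecidableEq A] (U : ℝ → Matrix A A ℝ) : Prop :=
  (∀ t : ℝ, 0 ≤ t → IsStochasticMat (U t)) ∧ U 0 = 1 ∧
    (∀ s t : ℝ, 0 ≤ s → 0 ≤ t → U (s + t) = U s * U t) ∧
    ∀ v : A → ℝ, ContinuousOn (fun t => (U t).mulVec v) (Set.Ici 0)

/-- The (matrix of the) pushforward along `f`. -/
def pushMat {A B : Type} [DecidableEq B] (f : A → B) : Matrix B A ℝ :=
  Matrix.of fun b a => if f a = b then 1 else 0

/-- A commuting square of maps that is a pullback: every compatible pair has a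
unique common preimage. -/
def IsPullbackSquare {A B C D : Type} (f : A → B) (g : A → C) (h : B → D) (k : C → D) : Prop :=
  (∀ a, h (f a) = k (g a)) ∧ ∀ (b : B) (c : C), h b = k c → ∃! a, f a = b ∧ g a = c

/-- A commuting square of maps satisfying the universal property of a pushout. -/
def IsPushoutSquare {T X Y Z : Type} (o : T → X) (i' : T → Y) (j : X → Z) (k : Y → Z) : Prop :=
  (∀ t, j (o t) = k (i' t)) ∧
    ∀ (W : Type) (u : X → W) (u' : Y → W), (∀ t, u (o t) = u' (i' t)) →
      ∃! w : Z → W, (∀ x, w (j x) = u x) ∧ ∀ y, w (k y) = u' y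

/-- The black-boxing of an open Markov process `S → (X,H) ← T`: the set of
steady-state boundary data `(i^* v, I, o^* v, O)`. -/
def blackBox {S X T : Type} [Fintype S] [Fintype T] [DecidableEq X]
    (i : S → X) (o : T → X) (H : (X → ℝ) →ₗ[ℝ] (X → ℝ)) :
    Set ((S → ℝ) × (S → ℝ) × (T → ℝ) × (T → ℝ)) :=
  {w | ∃ (v : X → ℝ) (I : S → ℝ) (O : T → ℝ),
    H v + pushforward i I - pushforward o O = 0 ∧
    w = (pullback i v, I, pullback o v, O)}

/-- The direct sum of two operators, under the canonical identification
`ℝ^{X ⊕ Y} ≃ ℝ^X ⊕ ℝ^Y`. -/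
def dsum {A B : Type} (H : (A → ℝ) →ₗ[ℝ] (A → ℝ)) (G : (B → ℝ) →ₗ[ℝ] (B → ℝ)) :
    (A ⊕ B → ℝ) →ₗ[ℝ] (A ⊕ B → ℝ) :=
  (LinearEquiv.sumArrowLequivProdArrow A B ℝ ℝ).symm.toLinearMap ∘ₗ
    (H.prodMap G) ∘ₗ (LinearEquiv.sumArrowLequivProdArrow A B ℝ ℝ).toLinearMap

/-!
Because `o` and `i'` are injective, the pushout square is also a pullback square, so the
Beck–Chevalley condition `j^* k_* = o_* i'^*` holds; as `j` and `k` are injective too, this shows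
that `j_* φ = k_* ψ` exactly when `φ = o_* O` and `ψ = i'_* O` for a single vector `O` on `T`.
A steady state `vz` of the composite is the same as a pair of states `v = j^* vz`, `v' = k^* vz`
agreeing on `T`, and the composite steady-state equation says that `j_*` of the net inflow
`H v + i_* I` equals `k_*` of the net outflow `o'_* O' - G v'`; the common `O` is then the flow
through `T`.
-/

open Function

section Vectors

variable {A B C D : Type}

@[simp]
lemma pullback_apply (f : A → B) (v : B → ℝ) (a : A) : pullback f v a = v (f a) := rfl

lemma pushforward_apply [Fintype A] [DecidableEq B] (f : A → B) (v : A → ℝ) (b : B) :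
    pushforward f v b = ∑ a ∈ Finset.univ.filter (fun a => f a = b), v a := rfl

lemma pushforward_comp [Fintype A] [Fintype B] [DecidableEq B] [DecidableEq C]
    (g : A → B) (f : B → C) (v : A → ℝ) :
    pushforward f (pushforward g v) = pushforward (f ∘ g) v := by
  funext c
  simp only [pushforward_apply]
  rw [Finset.sum_fiberwise_eq_sum_filter]
  congr 1
  ext a
  simp

lemma pullback_pushforward_of_injective [Fintype A] [DecidableEq B] {f : A → B}
    (hf : Injective f) (v : A → ℝ) : pullback f (pushforward f v) = v := by
  funext a
  have hfiber : Finset.univ.filter (fun a' => f a' = f a) = {a} := by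
    ext a'
    simp [hf.eq_iff]
  simp [pushforward_apply, hfiber]

lemma IsPullbackSquare.symm {f : A → B} {g : A → C} {h : B → D} {k : C → D}
    (hpb : IsPullbackSquare f g h k) : IsPullbackSquare g f k h :=
  ⟨fun a => (hpb.1 a).symm, fun c b hcb =>
    (hpb.2 b c hcb.symm).imp fun _ ha => ⟨ha.1.symm, fun a' h' => ha.2 a' h'.symm⟩⟩

/-- The Beck–Chevalley condition. -/
lemma IsPullbackSquare.pullback_pushforward [Fintype A] [Fintype C] [DecidableEq B]
    [DecidableEq D] {f : A → B} {g : A → C} {h : B → D} {k : C → D}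
    (hpb : IsPullbackSquare f g h k) (ψ : C → ℝ) :
    pullback h (pushforward k ψ) = pushforward f (pullback g ψ) := by
  funext b
  simp only [pullback_apply, pushforward_apply]
  symm
  refine Finset.sum_bij (fun a _ => g a) ?_ ?_ ?_ (fun _ _ => rfl)
  · intro a ha
    simp only [Finset.mem_filter, Finset.mem_univ, true_and] at ha ⊢
    rw [← hpb.1 a, ha]
  · intro a₁ ha₁ a₂ ha₂ hg
    simp only [Finset.mem_filter, Finset.mem_univ, true_and] at ha₁ ha₂
    obtain ⟨a, -, huniq⟩ := hpb.2 b (g a₁) (by rw [← ha₁, hpb.1])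
    exact (huniq a₁ ⟨ha₁, rfl⟩).trans (huniq a₂ ⟨ha₂, hg.symm⟩).symm
  · intro c hc
    simp only [Finset.mem_filter, Finset.mem_univ, true_and] at hc
    obtain ⟨a, ⟨hfa, hga⟩, -⟩ := hpb.2 b c hc.symm
    exact ⟨a, by simpa using hfa, hga⟩

end Vectors

namespace IsPushoutSquare

variable {T X Y Z : Type} {o : T → X} {i' : T → Y} {j : X → Z} {k : Y → Z}

lemma symm (hpo : IsPushoutSquare o i' j k) : IsPushoutSquare i' o k j := by
  refine ⟨fun t => (hpo.1 t).symm, fun W u u' hu => ?_⟩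
  obtain ⟨w, ⟨hwj, hwk⟩, huniq⟩ := hpo.2 W u' u fun t => (hu t).symm
  exact ⟨w, ⟨hwk, hwj⟩, fun w' hw' => huniq w' ⟨hw'.2, hw'.1⟩⟩

lemma exists_fiber_map (hi' : Injective i') (hpo : IsPushoutSquare o i' j k) :
    ∃ w : Z → Set X, (∀ x, w (j x) = {x}) ∧ ∀ y, w (k y) = o '' (i' ⁻¹' {y}) := by
  refine (hpo.2 (Set X) (fun x => {x}) (fun y => o '' (i' ⁻¹' {y})) fun t => ?_).exists
  rw [show i' ⁻¹' {i' t} = {t} by ext; simp [hi'.eq_iff], Set.image_singleton]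

lemma injective_left (hi' : Injective i') (hpo : IsPushoutSquare o i' j k) : Injective j := by
  obtain ⟨w, hwj, -⟩ := hpo.exists_fiber_map hi'
  intro x x' hxx'
  simpa [hwj] using congrArg w hxx'

lemma injective_right (ho : Injective o) (hpo : IsPushoutSquare o i' j k) : Injective k :=
  hpo.symm.injective_left ho

lemma isPullbackSquare (ho : Injective o) (hi' : Injective i')
    (hpo : IsPushoutSquare o i' j k) : IsPullbackSquare o i' j k := by
  refine ⟨hpo.1, fun x y hxy => ?_⟩
  obtain ⟨w, hwj, hwk⟩ := hpo.exists_fiber_map hi'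
  have hx : x ∈ o '' (i' ⁻¹' {y}) := by rw [← hwk, ← hxy, hwj]; rfl
  obtain ⟨t, hyt, hxt⟩ := hx
  exact ⟨t, ⟨hxt, hyt⟩, fun t' ht' => ho (ht'.1.trans hxt.symm)⟩

lemma exists_pullback_eq_iff (hpo : IsPushoutSquare o i' j k) {v : X → ℝ} {v' : Y → ℝ} :
    (∃ vz, pullback j vz = v ∧ pullback k vz = v') ↔ pullback o v = pullback i' v' := by
  constructor
  · rintro ⟨vz, rfl, rfl⟩
    funext t
    simp [hpo.1 t]
  · intro h
    obtain ⟨vz, ⟨hvj, hvk⟩, -⟩ := hpo.2 ℝ v v' (congrFun h)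
    exact ⟨vz, funext hvj, funext hvk⟩

lemma pushforward_eq_pushforward_iff [Fintype T] [Fintype X] [Fintype Y] [DecidableEq X]
    [DecidableEq Y] [DecidableEq Z] (ho : Injective o) (hi' : Injective i')
    (hpo : IsPushoutSquare o i' j k) {φ : X → ℝ} {ψ : Y → ℝ} :
    pushforward j φ = pushforward k ψ ↔
      ∃ O, pushforward o O = φ ∧ pushforward i' O = ψ := by
  constructor
  · intro h
    have hpb := hpo.isPullbackSquare ho hi'
    have hφ : pushforward o (pullback i' ψ) = φ := by
      rw [← hpb.pullback_pushforward, ← h,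
        pullback_pushforward_of_injective (hpo.injective_left hi')]
    have hψ : pushforward i' (pullback o φ) = ψ := by
      rw [← hpb.symm.pullback_pushforward, h,
        pullback_pushforward_of_injective (hpo.injective_right ho)]
    refine ⟨pullback i' ψ, hφ, ?_⟩
    rwa [← hφ, pullback_pushforward_of_injective ho] at hψ
  · rintro ⟨O, rfl, rfl⟩
    rw [pushforward_comp, pushforward_comp, show j ∘ o = k ∘ i' from funext hpo.1]

end IsPushoutSquare

lemma mem_blackBox_iff {S X T : Type} [Fintype S] [Fintype T] [DecidableEq X]
    {i : S → X} {o : T → X} {H : (X → ℝ) →ₗ[ℝ] (X → ℝ)} {a I : S → ℝ} {b O : T → ℝ} :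
    (a, I, b, O) ∈ blackBox i o H ↔
      ∃ v, H v + pushforward i I = pushforward o O ∧ pullback i v = a ∧ pullback o v = b := by
  simp only [blackBox, Set.mem_ofPred_eq, Prod.mk.injEq, sub_eq_zero]
  constructor
  · rintro ⟨v, I, O, hv, rfl, rfl, rfl, rfl⟩
    exact ⟨v, hv, rfl, rfl⟩
  · rintro ⟨v, hv, rfl, rfl⟩
    exact ⟨v, I, O, hv, rfl, rfl, rfl, rfl⟩

theorem blackBox_composite_general
    {S X T Y U Z : Type}
    [Fintype S] [Fintype X] [Fintype T] [Fintype Y] [Fintype U]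
    [DecidableEq X] [DecidableEq Y] [DecidableEq Z]
    (i : S → X) (o : T → X) (ho : Function.Injective o)
    (H : (X → ℝ) →ₗ[ℝ] (X → ℝ))
    (i' : T → Y) (o' : U → Y) (hi' : Function.Injective i')
    (G : (Y → ℝ) →ₗ[ℝ] (Y → ℝ))
    (j : X → Z) (k : Y → Z) (hpo : IsPushoutSquare o i' j k) :
    blackBox (j ∘ i) (k ∘ o')
        (pushforward j ∘ₗ H ∘ₗ pullback j + pushforward k ∘ₗ G ∘ₗ pullback k) =
      {w : (S → ℝ) × (S → ℝ) × (U → ℝ) × (U → ℝ) |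
        ∃ (b : T → ℝ) (O : T → ℝ),
          (w.1, w.2.1, b, O) ∈ blackBox i o H ∧
          (b, O, w.2.2.1, w.2.2.2) ∈ blackBox i' o' G} := by
  ext ⟨a, I, c, O'⟩
  have hcomposite : ∀ vz,
      (pushforward j ∘ₗ H ∘ₗ pullback j + pushforward k ∘ₗ G ∘ₗ pullback k) vz
        + pushforward (j ∘ i) I = pushforward (k ∘ o') O' ↔
      pushforward j (H (pullback j vz) + pushforward i I) =
        pushforward k (pushforward o' O' - G (pullback k vz)) := by
    intro vz
    simp only [LinearMap.add_apply, LinearMap.comp_apply, map_add, map_sub, pushforward_comp]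
    constructor <;> intro h <;> linear_combination h
  simp only [Set.mem_ofPred_eq, mem_blackBox_iff, hcomposite,
    hpo.pushforward_eq_pushforward_iff ho hi']
  constructor
  · rintro ⟨vz, ⟨O, hO, hO'⟩, rfl, rfl⟩
    exact ⟨_, O, ⟨pullback j vz, hO.symm, rfl, rfl⟩,
      ⟨pullback k vz, by rw [hO']; abel,
        (hpo.exists_pullback_eq_iff.1 ⟨vz, rfl, rfl⟩).symm, rfl⟩⟩
  · rintro ⟨b, O, ⟨v, hv, rfl, rfl⟩, ⟨v', hv', hb, rfl⟩⟩
    obtain ⟨vz, rfl, rfl⟩ := hpo.exists_pullback_eq_iff.2 hb.symm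
    exact ⟨vz, ⟨O, hv.symm, eq_sub_of_add_eq' hv'⟩, rfl, rfl⟩

/-- Black-boxing preserves composition: the black-boxing of the
composite of two open Markov processes equals the composite of their black-boxings as
linear relations. -/
theorem blackBox_composite
    {S X T Y U Z : Type}
    [Fintype S] [Fintype X] [Fintype T] [Fintype Y] [Fintype U]
    [DecidableEq X] [DecidableEq Y] [DecidableEq Z]
    (i : S → X) (o : T → X) (hi : Function.Injective i) (ho : Function.Injective o)
    (H : (X → ℝ) →ₗ[ℝ] (X → ℝ)) (hH : IsInfinitesimalStochastic H)
    (i' : T → Y) (o' : U → Y) (hi' : Function.Injective i') (ho' : Function.Injective o')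
    (G : (Y → ℝ) →ₗ[ℝ] (Y → ℝ)) (hG : IsInfinitesimalStochastic G)
    (j : X → Z) (k : Y → Z) (hpo : IsPushoutSquare o i' j k) :
    blackBox (j ∘ i) (k ∘ o')
        (pushforward j ∘ₗ H ∘ₗ pullback j + pushforward k ∘ₗ G ∘ₗ pullback k) =
      {w : (S → ℝ) × (S → ℝ) × (U → ℝ) × (U → ℝ) |
        ∃ (b : T → ℝ) (O : T → ℝ),
          (w.1, w.2.1, b, O) ∈ blackBox i o H ∧
          (b, O, w.2.2.1, w.2.2.2) ∈ blackBox i' o' G} :=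
  blackBox_composite_general i o ho H i' o' hi' G j k hpo

end
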